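/- arXiv:2201.10710 — 2 statements merged into one kernel-verified Lean document; each statement's English description precedes it below -/
import Mathlib

section
/- Let A be a finite-dimensional unimodular Hopf algebra over a field k with a nonzero left integral Λ. Then for every n ∈ ℤ the element P_n(Λ) is central in A. -/
open TensorProduct

noncomputable section

variable (k : Type*) [Field k] (A : Type*) [Ring A] [HopfAlgebra k A]

/-- `PposGen D n a = a₍₁₎ ⋯ a₍ₙ₎` (with value `ε(a)1` for `n = 0`), built from a given
comultiplication-like map `D`. -/
def PposGen (D : A →ₗ[k] A ⊗[k] A) : ℕ → (A →ₗ[k] A)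
  | 0 => Algebra.linearMap k A ∘ₗ Coalgebra.counit
  | n+1 => LinearMap.mul' k A ∘ₗ TensorProduct.map LinearMap.id (PposGen D n) ∘ₗ D

/-- Reversed products of Sweedler components: `QposGen D n a = a₍ₙ₎ ⋯ a₍₁₎`. -/
def QposGen (D : A →ₗ[k] A ⊗[k] A) : ℕ → (A →ₗ[k] A)
  | 0 => Algebra.linearMap k A ∘ₗ Coalgebra.counit
  | n+1 => LinearMap.mul' k A ∘ₗ (TensorProduct.comm k A A).toLinearMap
      ∘ₗ TensorProduct.map LinearMap.id (QposGen D n) ∘ₗ D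

/-- The `n`-th Sweedler power map associated to a comultiplication-like map `D` and an
antipode-like map `S'`: for `n ≥ 0` it is `a ↦ a₍₁₎ ⋯ a₍ₙ₎`, and for `n ≤ -1` it is
`a ↦ S'(a₍₋ₙ₎ ⋯ a₍₁₎)`. -/
def PGen (D : A →ₗ[k] A ⊗[k] A) (S' : A →ₗ[k] A) (n : ℤ) : A →ₗ[k] A :=
  if 0 ≤ n then PposGen k A D n.toNat else S' ∘ₗ QposGen k A D (-n).toNat

/-- The `n`-th Sweedler power map `P_n` of the Hopf algebra `A`. -/
def SweedlerP (n : ℤ) : A →ₗ[k] A :=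
  PGen k A Coalgebra.comul (HopfAlgebra.antipode (R := k)) n

/-- `Λ` is a left integral in `A`: `a Λ = ε(a) Λ` for all `a`. -/
def IsLeftIntegral (Λ : A) : Prop := ∀ a : A, a * Λ = Coalgebra.counit (R := k) a • Λ

/-- `α ∈ A*` is the distinguished group-like element associated to the left integral `Λ`:
`Λ a = α(a) Λ` for all `a`. -/
def IsDistinguished (Λ : A) (α : A →ₗ[k] k) : Prop := ∀ a : A, Λ * a = α a • Λ

/-- `a† = a₍₁₎ α(S⁻¹(a₍₂₎))`, as a linear map in `a` (here `Sinv` is the inverse of the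
antipode and `α` is the distinguished group-like element). -/
def dagger (α : A →ₗ[k] k) (Sinv : A →ₗ[k] A) : A →ₗ[k] A :=
  (TensorProduct.rid k A).toLinearMap ∘ₗ
    TensorProduct.map LinearMap.id (α ∘ₗ Sinv) ∘ₗ Coalgebra.comul


end

/-!
Write `f^{*n}` for convolution powers of linear maps `A → B`. Then `Pₙ = id^{*n}` for `n ≥ 0`,
and `P₋ₙ = S ∘ Qₙ = S^{*n}` because `S` is an anti-homomorphism.

If `f` is multiplicative, then `f^{*n}(y₍₁₎a) f(y₍₂₎) = f(y₍₁₎) f^{*n}(a y₍₂₎)`: on the coalgebra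
`A ⊗ A`, with `F = f ⊗ ε` and `G = ε ⊗ f`, we have `FG = f ∘ μ`, hence `(FG)ⁿ = f^{*n} ∘ μ`
because `μ` is a coalgebra map, and the two sides are `(FG)ⁿF` and `F(GF)ⁿ` evaluated at `y ⊗ a`.
If `f` is anti-multiplicative, the roles of `FG` and `GF` are swapped.

A two-sided integral satisfies `Λ₍₁₎a ⊗ Λ₍₂₎ = Λ₍₁₎ ⊗ Λ₍₂₎S(a)` and
`Λ₍₁₎ ⊗ aΛ₍₂₎ = S(a)Λ₍₁₎ ⊗ Λ₍₂₎`. Together with the identity above, these move `f(S a)`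
(resp. `f(a)`) through `f^{*n}(Λ)`. For `f = id` and `f = S` this shows that `Pₙ(Λ)` commutes
with the image of `S`, and such an element is central:
`a x = a₍₁₎ x S(a₍₂₎) a₍₃₎ = a₍₁₎ S(a₍₂₎) x a₍₃₎ = x a`.
-/

open Coalgebra HopfAlgebra WithConv LinearMap

section Convolution

variable {R A B : Type*} [CommSemiring R] [Semiring A] [HopfAlgebra R A] [Semiring B]
  [Algebra R B]

theorem Coalgebra.sum_counit_right_smul_left {a : A} {ι : Type*} (𝓡 : Repr R a ι) :
    ∑ i ∈ 𝓡.index, counit (R := R) (𝓡.right i) • 𝓡.left i = a := by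
  simpa only [map_sum, _root_.TensorProduct.rid_tmul, one_smul] using
    congr(_root_.TensorProduct.rid R A $(sum_tmul_counit_eq (R := R) 𝓡))

namespace LinearMap

theorem toConv_counit_smulRight_mul (t : B) (g : A →ₗ[R] B) :
    toConv ((counit : A →ₗ[R] R).smulRight t) * toConv g = toConv (mulLeft R t ∘ₗ g) := by
  ext a
  simp_rw [(ℛ R a).convMul_apply, smulRight_apply, smul_mul_assoc, ← mul_smul_comm,
    ← Finset.mul_sum, ← map_smul, ← map_sum, sum_counit_smul]
  rfl

theorem toConv_mul_toConv_counit_smulRight (t : B) (g : A →ₗ[R] B) :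
    toConv g * toConv ((counit : A →ₗ[R] R).smulRight t) = toConv (mulRight R t ∘ₗ g) := by
  ext a
  simp_rw [(ℛ R a).convMul_apply, smulRight_apply, mul_smul_comm, ← smul_mul_assoc,
    ← Finset.sum_mul, ← map_smul, ← map_sum, sum_counit_right_smul_left]
  rfl

theorem convMul_mulRight_comp_apply (f g : A →ₗ[R] B) (t : B) (a : A) :
    (toConv f * toConv (mulRight R t ∘ₗ g)) a = (toConv f * toConv g) a * t := by
  simp [(ℛ R a).convMul_apply, Finset.sum_mul, mul_assoc]

theorem convMul_mulLeft_comp_apply (f g : A →ₗ[R] B) (t : B) (a : A) :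
    (toConv (mulLeft R t ∘ₗ f) * toConv g) a = t * (toConv f * toConv g) a := by
  simp [(ℛ R a).convMul_apply, Finset.mul_sum, mul_assoc]

end LinearMap

namespace AlgHom

theorem toConv_mul_toConv_comp_antipode (j : A →ₐ[R] B) :
    toConv j.toLinearMap * toConv (j.toLinearMap ∘ₗ antipode R) = 1 := by
  calc _ = toConv (j.toLinearMap ∘ₗ
          (toConv LinearMap.id * toConv (antipode R) : WithConv (A →ₗ[R] A)).ofConv) := by
        rw [algHom_comp_convMul_distrib]; rfl
    _ = 1 := by rw [id_mul_antipode]; ext; simp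

theorem toConv_comp_antipode_mul_toConv (j : A →ₐ[R] B) :
    toConv (j.toLinearMap ∘ₗ antipode R) * toConv j.toLinearMap = 1 := by
  calc _ = toConv (j.toLinearMap ∘ₗ
          (toConv (antipode R) * toConv LinearMap.id : WithConv (A →ₗ[R] A)).ofConv) := by
        rw [algHom_comp_convMul_distrib]; rfl
    _ = 1 := by rw [antipode_mul_id]; ext; simp

end AlgHom

theorem mul_comm_of_forall_mul_antipode_comm {x : A}
    (hx : ∀ b : A, x * antipode R b = antipode R b * x) (a : A) : a * x = x * a := by
  have h : toConv (mulRight R x) * toConv (antipode R) =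
      toConv ((counit : A →ₗ[R] R).smulRight x) := by
    ext b
    simp only [(ℛ R b).convMul_apply, mulRight_apply, smulRight_apply]
    simp_rw [mul_assoc, hx, ← mul_assoc]
    rw [← Finset.sum_mul, sum_mul_antipode_eq_algebraMap_counit, Algebra.smul_def]
  have : toConv (mulRight R x) = toConv (mulLeft R x ∘ₗ LinearMap.id) := by
    rw [← mul_one (toConv (mulRight R x)), ← antipode_mul_id, ← mul_assoc, h,
      toConv_counit_smulRight_mul]
  exact congr($this a)

section Integral

variable {Λ : A}

open Algebra.TensorProduct in
theorem comul_mul_tmul_one_of_right_integral (hΛ : ∀ a : A, Λ * a = counit (R := R) a • Λ)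
    (a : A) : comul (R := R) Λ * (a ⊗ₜ 1) = comul (R := R) Λ * (1 ⊗ₜ antipode R a) := by
  -- `L ⋆ j = ε(·) Δ(Λ)` because `Δ(Λ) Δ(b) = ε(b) Δ(Λ)`, and `j` has convolution inverse `j ∘ S`.
  let L := mulLeft R (comul (R := R) Λ) ∘ₗ (includeLeft : A →ₐ[R] A ⊗[R] A).toLinearMap
  let j : A →ₐ[R] A ⊗[R] A := includeRight
  have hL : toConv L * toConv j.toLinearMap =
      toConv ((counit : A →ₗ[R] R).smulRight (comul (R := R) Λ)) := by
    ext b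
    simp only [L, j, (ℛ R b).convMul_apply]
    simp [mul_assoc, ← Finset.mul_sum, (ℛ R b).eq, ← Bialgebra.comul_mul, hΛ]
  have : toConv L = toConv (mulLeft R (comul (R := R) Λ) ∘ₗ j.toLinearMap ∘ₗ antipode R) := by
    rw [← mul_one (toConv L), ← j.toConv_mul_toConv_comp_antipode, ← mul_assoc, hL,
      toConv_counit_smulRight_mul]
  exact congr($this a)

open Algebra.TensorProduct in
theorem one_tmul_mul_comul_of_left_integral (hΛ : ∀ a : A, a * Λ = counit (R := R) a • Λ)
    (a : A) : (1 ⊗ₜ a) * comul (R := R) Λ = (antipode R a ⊗ₜ 1) * comul (R := R) Λ := by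
  let L := mulRight R (comul (R := R) Λ) ∘ₗ (includeRight : A →ₐ[R] A ⊗[R] A).toLinearMap
  let j : A →ₐ[R] A ⊗[R] A := includeLeft
  have hL : toConv j.toLinearMap * toConv L =
      toConv ((counit : A →ₗ[R] R).smulRight (comul (R := R) Λ)) := by
    ext b
    simp only [L, j, (ℛ R b).convMul_apply]
    simp [← mul_assoc, ← Finset.sum_mul, (ℛ R b).eq, ← Bialgebra.comul_mul, hΛ]
  have : toConv L = toConv (mulRight R (comul (R := R) Λ) ∘ₗ j.toLinearMap ∘ₗ antipode R) := by
    rw [← one_mul (toConv L), ← j.toConv_comp_antipode_mul_toConv, mul_assoc, hL,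
      toConv_mul_toConv_counit_smulRight]
  exact congr($this a)

theorem convMul_comp_mulRight_apply_of_right_integral
    (hΛ : ∀ a : A, Λ * a = counit (R := R) a • Λ) (g h : A →ₗ[R] B) (a : A) :
    (toConv (g ∘ₗ mulRight R a) * toConv h) Λ =
      (toConv g * toConv (h ∘ₗ mulRight R (antipode R a))) Λ := by
  have := congr(mul' R B (map g h $(comul_mul_tmul_one_of_right_integral hΛ a)))
  simpa [← mulRight_apply (R := R) (_ ⊗ₜ _), mulRight_tmul, TensorProduct.map_map] using this

theorem convMul_comp_mulLeft_apply_of_left_integral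
    (hΛ : ∀ a : A, a * Λ = counit (R := R) a • Λ) (g h : A →ₗ[R] B) (a : A) :
    (toConv g * toConv (h ∘ₗ mulLeft R a)) Λ =
      (toConv (g ∘ₗ mulLeft R (antipode R a)) * toConv h) Λ := by
  have := congr(mul' R B (map g h $(one_tmul_mul_comul_of_left_integral hΛ a)))
  simpa [← mulLeft_apply (R := R) (_ ⊗ₜ _), mulLeft_tmul, TensorProduct.map_map] using this

end Integral

section TensorSquare

variable (R A) in
noncomputable def idTensorCounit : A ⊗[R] A →ₗ[R] A :=
  (_root_.TensorProduct.rid R A).toLinearMap ∘ₗ lTensor A counit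

variable (R A) in
noncomputable def counitTensorId : A ⊗[R] A →ₗ[R] A :=
  (_root_.TensorProduct.lid R A).toLinearMap ∘ₗ rTensor A counit

variable (R A) in
noncomputable def mulOpCoalgHom : A ⊗[R] A →ₗc[R] A :=
  (Bialgebra.mulCoalgHom R A).comp (Bialgebra.TensorProduct.comm R A A : A ⊗[R] A →ₗc[R] A ⊗[R] A)

@[simp] theorem idTensorCounit_tmul (x y : A) :
    idTensorCounit R A (x ⊗ₜ y) = counit (R := R) y • x := rfl

@[simp] theorem counitTensorId_tmul (x y : A) :
    counitTensorId R A (x ⊗ₜ y) = counit (R := R) x • y := rfl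

@[simp] theorem mulOpCoalgHom_tmul (x y : A) : mulOpCoalgHom R A (x ⊗ₜ y) = y * x := rfl

theorem toConv_comp_idTensorCounit_mul (f g : A →ₗ[R] B) :
    toConv (f ∘ₗ idTensorCounit R A) * toConv (g ∘ₗ counitTensorId R A) =
      toConv (mul' R B ∘ₗ map f g) := by
  refine WithConv.ext (TensorProduct.ext' fun x y => ?_)
  conv_rhs => rw [← sum_counit_right_smul_left (ℛ R x), ← sum_counit_smul (ℛ R y)]
  simp [((ℛ R x).tmul (ℛ R y)).convMul_apply, Finset.sum_product, Finset.sum_mul_sum,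
    smul_smul, mul_comm]

theorem toConv_comp_counitTensorId_mul (f g : A →ₗ[R] B) :
    toConv (g ∘ₗ counitTensorId R A) * toConv (f ∘ₗ idTensorCounit R A) =
      toConv (mul' R B ∘ₗ map g f ∘ₗ (TensorProduct.comm R A A).toLinearMap) := by
  refine WithConv.ext (TensorProduct.ext' fun x y => ?_)
  conv_rhs => rw [← sum_counit_smul (ℛ R x), ← sum_counit_right_smul_left (ℛ R y)]
  simp [((ℛ R x).tmul (ℛ R y)).convMul_apply, Finset.sum_product, Finset.sum_mul_sum,
    smul_smul, mul_comm]
  exact Finset.sum_comm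

theorem toConv_comp_coalgHom_pow {C D : Type*} [AddCommMonoid C] [Module R C] [Coalgebra R C]
    [AddCommMonoid D] [Module R D] [Coalgebra R D] (X : D →ₗ[R] B) (φ : C →ₗc[R] D) (n : ℕ) :
    toConv (X ∘ₗ φ.toLinearMap) ^ n = toConv ((toConv X ^ n).ofConv ∘ₗ φ.toLinearMap) := by
  induction n with
  | zero => ext; simp
  | succ n ih => rw [pow_succ, ih, pow_succ, convMul_comp_coalgHom_distrib]

theorem toConv_mul_comp_idTensorCounit_apply (X : A ⊗[R] A →ₗ[R] B) (f : A →ₗ[R] B) (y a : A) :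
    (toConv X * toConv (f ∘ₗ idTensorCounit R A)) (y ⊗ₜ a) =
      (toConv (X ∘ₗ (TensorProduct.mk R A A).flip a) * toConv f) y := by
  conv_rhs => rw [← sum_counit_right_smul_left (ℛ R a)]
  simp [((ℛ R y).tmul (ℛ R a)).convMul_apply, (ℛ R y).convMul_apply, Finset.sum_product,
    Finset.sum_mul]

theorem toConv_comp_idTensorCounit_mul_apply (X : A ⊗[R] A →ₗ[R] B) (f : A →ₗ[R] B) (y a : A) :
    (toConv (f ∘ₗ idTensorCounit R A) * toConv X) (y ⊗ₜ a) =
      (toConv f * toConv (X ∘ₗ (TensorProduct.mk R A A).flip a)) y := by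
  conv_rhs => rw [← sum_counit_smul (ℛ R a)]
  simp [((ℛ R y).tmul (ℛ R a)).convMul_apply, (ℛ R y).convMul_apply, Finset.sum_product,
    Finset.mul_sum]

theorem toConv_convPow_comp_flip_mul_eq (f : A →ₗ[R] B) {m₁ m₂ : A ⊗[R] A →ₗc[R] A}
    (h₁ : toConv (f ∘ₗ idTensorCounit R A) * toConv (f ∘ₗ counitTensorId R A) =
      toConv (f ∘ₗ m₁.toLinearMap))
    (h₂ : toConv (f ∘ₗ counitTensorId R A) * toConv (f ∘ₗ idTensorCounit R A) =
      toConv (f ∘ₗ m₂.toLinearMap)) (n : ℕ) (a : A) :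
    toConv ((toConv f ^ n).ofConv ∘ₗ m₁.toLinearMap ∘ₗ (TensorProduct.mk R A A).flip a) *
        toConv f =
      toConv f *
        toConv ((toConv f ^ n).ofConv ∘ₗ m₂.toLinearMap ∘ₗ (TensorProduct.mk R A A).flip a) := by
  set F := toConv (f ∘ₗ idTensorCounit R A)
  set G := toConv (f ∘ₗ counitTensorId R A)
  have key : (F * G) ^ n * F = F * (G * F) ^ n :=
    ((SemiconjBy.pow_right (mul_assoc F G F).symm n).eq).symm
  rw [h₁, h₂, toConv_comp_coalgHom_pow, toConv_comp_coalgHom_pow] at key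
  refine WithConv.ext (LinearMap.ext fun y => ?_)
  have := congr($key (y ⊗ₜ a))
  rwa [toConv_mul_comp_idTensorCounit_apply, toConv_comp_idTensorCounit_mul_apply] at this

theorem toConv_convPow_comp_mulRight_mul_of_map_mul (f : A →ₗ[R] B)
    (hf : ∀ x y, f (x * y) = f x * f y) (n : ℕ) (a : A) :
    toConv ((toConv f ^ n).ofConv ∘ₗ mulRight R a) * toConv f =
      toConv f * toConv ((toConv f ^ n).ofConv ∘ₗ mulLeft R a) := by
  have h₁ : toConv (f ∘ₗ idTensorCounit R A) * toConv (f ∘ₗ counitTensorId R A) =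
      toConv (f ∘ₗ (Bialgebra.mulCoalgHom R A).toLinearMap) := by
    rw [toConv_comp_idTensorCounit_mul]; congr 1; ext; simp [hf]
  have h₂ : toConv (f ∘ₗ counitTensorId R A) * toConv (f ∘ₗ idTensorCounit R A) =
      toConv (f ∘ₗ (mulOpCoalgHom R A).toLinearMap) := by
    rw [toConv_comp_counitTensorId_mul]; congr 1; ext; simp [hf]
  convert toConv_convPow_comp_flip_mul_eq f h₁ h₂ n a using 3 <;> ext <;> simp

theorem toConv_convPow_comp_mulLeft_mul_of_map_mul_rev (f : A →ₗ[R] B)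
    (hf : ∀ x y, f (x * y) = f y * f x) (n : ℕ) (a : A) :
    toConv ((toConv f ^ n).ofConv ∘ₗ mulLeft R a) * toConv f =
      toConv f * toConv ((toConv f ^ n).ofConv ∘ₗ mulRight R a) := by
  have h₁ : toConv (f ∘ₗ idTensorCounit R A) * toConv (f ∘ₗ counitTensorId R A) =
      toConv (f ∘ₗ (mulOpCoalgHom R A).toLinearMap) := by
    rw [toConv_comp_idTensorCounit_mul]; congr 1; ext; simp [hf]
  have h₂ : toConv (f ∘ₗ counitTensorId R A) * toConv (f ∘ₗ idTensorCounit R A) =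
      toConv (f ∘ₗ (Bialgebra.mulCoalgHom R A).toLinearMap) := by
    rw [toConv_comp_counitTensorId_mul]; congr 1; ext; simp [hf]
  convert toConv_convPow_comp_flip_mul_eq f h₁ h₂ n a using 3 <;> ext <;> simp

end TensorSquare

section TwoSidedIntegral

variable {Λ : A}

theorem convPow_apply_mul_map_antipode_comm_of_map_mul
    (hL : ∀ a : A, a * Λ = counit (R := R) a • Λ) (hR : ∀ a : A, Λ * a = counit (R := R) a • Λ)
    (f : A →ₗ[R] B) (hf : ∀ x y, f (x * y) = f x * f y) (n : ℕ) (a : A) :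
    (toConv f ^ n) Λ * f (antipode R a) = f (antipode R a) * (toConv f ^ n) Λ := by
  cases n with
  | zero => simpa using Algebra.commutes _ _
  | succ n =>
    have hfR : f ∘ₗ mulRight R (antipode R a) = mulRight R (f (antipode R a)) ∘ₗ f := by
      ext; simp [hf]
    have hfL : f ∘ₗ mulLeft R (antipode R a) = mulLeft R (f (antipode R a)) ∘ₗ f := by
      ext; simp [hf]
    calc (toConv f ^ (n + 1)) Λ * f (antipode R a)
        = (toConv f ^ n * toConv (f ∘ₗ mulRight R (antipode R a))) Λ := by
          rw [hfR, ← toConv_ofConv (toConv f ^ n), convMul_mulRight_comp_apply, pow_succ]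
      _ = (toConv ((toConv f ^ n).ofConv ∘ₗ mulRight R a) * toConv f) Λ :=
          (convMul_comp_mulRight_apply_of_right_integral hR _ _ a).symm
      _ = (toConv f * toConv ((toConv f ^ n).ofConv ∘ₗ mulLeft R a)) Λ := by
          rw [toConv_convPow_comp_mulRight_mul_of_map_mul f hf]
      _ = (toConv (f ∘ₗ mulLeft R (antipode R a)) * toConv f ^ n) Λ :=
          convMul_comp_mulLeft_apply_of_left_integral hL _ _ a
      _ = f (antipode R a) * (toConv f ^ (n + 1)) Λ := by
          rw [hfL, ← toConv_ofConv (toConv f ^ n), convMul_mulLeft_comp_apply, pow_succ']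

theorem convPow_apply_mul_comm_of_map_mul_rev
    (hL : ∀ a : A, a * Λ = counit (R := R) a • Λ) (hR : ∀ a : A, Λ * a = counit (R := R) a • Λ)
    (f : A →ₗ[R] B) (hf : ∀ x y, f (x * y) = f y * f x) (n : ℕ) (a : A) :
    (toConv f ^ n) Λ * f a = f a * (toConv f ^ n) Λ := by
  cases n with
  | zero => simpa using Algebra.commutes _ _
  | succ n =>
    have hfR : f ∘ₗ mulRight R a = mulLeft R (f a) ∘ₗ f := by ext; simp [hf]
    have hfL : f ∘ₗ mulLeft R a = mulRight R (f a) ∘ₗ f := by ext; simp [hf]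
    calc (toConv f ^ (n + 1)) Λ * f a
        = (toConv f ^ n * toConv (f ∘ₗ mulLeft R a)) Λ := by
          rw [hfL, ← toConv_ofConv (toConv f ^ n), convMul_mulRight_comp_apply, pow_succ]
      _ = (toConv ((toConv f ^ n).ofConv ∘ₗ mulLeft R (antipode R a)) * toConv f) Λ :=
          convMul_comp_mulLeft_apply_of_left_integral hL _ _ a
      _ = (toConv f * toConv ((toConv f ^ n).ofConv ∘ₗ mulRight R (antipode R a))) Λ := by
          rw [toConv_convPow_comp_mulLeft_mul_of_map_mul_rev f hf]
      _ = (toConv (f ∘ₗ mulRight R a) * toConv f ^ n) Λ :=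
          (convMul_comp_mulRight_apply_of_right_integral hR _ _ a).symm
      _ = f a * (toConv f ^ (n + 1)) Λ := by
          rw [hfR, ← toConv_ofConv (toConv f ^ n), convMul_mulLeft_comp_apply, pow_succ']

end TwoSidedIntegral

end Convolution

section SweedlerPower

variable {k A : Type*} [Field k] [Ring A] [HopfAlgebra k A]

theorem PposGen_comul_eq_convPow (n : ℕ) :
    PposGen k A comul n = (toConv LinearMap.id ^ n).ofConv := by
  induction n with
  | zero => rfl
  | succ n ih => rw [pow_succ', PposGen, ih]; rfl

theorem antipode_comp_QposGen_comul_eq_convPow (n : ℕ) :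
    antipode k ∘ₗ QposGen k A comul n = (toConv (antipode k) ^ n).ofConv := by
  induction n with
  | zero => ext; simp [QposGen, Algebra.algebraMap_eq_smul_one]
  | succ n ih =>
    rw [pow_succ', ← toConv_ofConv (toConv (antipode k) ^ n), ← ih]
    ext x
    simp [(ℛ k x).convMul_apply, QposGen, ← (ℛ k x).eq, antipode_mul_antidistrib]

end SweedlerPower

theorem sweedler_power_integral_central_of_unimodular_general
    (k : Type*) [Field k] (A : Type*) [Ring A] [HopfAlgebra k A]
    (Λ : A) (hint : IsLeftIntegral k A Λ)
    (hunimod : IsDistinguished k A Λ (Coalgebra.counit (R := k)))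
    (n : ℤ) (a : A) :
    a * SweedlerP k A n Λ = SweedlerP k A n Λ * a := by
  refine mul_comm_of_forall_mul_antipode_comm (R := k) (fun b => ?_) a
  rw [SweedlerP, PGen]
  split_ifs
  · rw [PposGen_comul_eq_convPow]
    exact convPow_apply_mul_map_antipode_comm_of_map_mul hint hunimod _ (fun _ _ => rfl) _ b
  · rw [antipode_comp_QposGen_comul_eq_convPow]
    exact convPow_apply_mul_comm_of_map_mul_rev hint hunimod _ antipode_mul_antidistrib _ _

/-- Let `A` be a finite-dimensional unimodular Hopf algebra over a field `k`
(i.e. the distinguished group-like element attached to a nonzero left integral `Λ` is the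
counit) with a nonzero left integral `Λ`. Then for every `n ∈ ℤ` the element `Pₙ(Λ)` is
central in `A`. -/
theorem sweedler_power_integral_central_of_unimodular
    (k : Type*) [Field k] (A : Type*) [Ring A] [HopfAlgebra k A] [FiniteDimensional k A]
    (Λ : A) (hΛ : Λ ≠ 0) (hint : IsLeftIntegral k A Λ)
    (hunimod : IsDistinguished k A Λ (Coalgebra.counit (R := k)))
    (n : ℤ) (a : A) :
    a * SweedlerP k A n Λ = SweedlerP k A n Λ * a :=
  sweedler_power_integral_central_of_unimodular_general k A Λ hint hunimod n a
end

section
/- Let A be a finite-dimensional Hopf algebra over a field k with a right integral λ ∈ A* and a left integral Λ ∈ A normalized so that λ(Λ) = 1. Then for every n ∈ ℤ the n-th indicator of A satisfies ν_n(A) = λ(S(P_n(Λ))), where ν_n(A) = tr(S ∘ P_{n-1}). -/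
open TensorProduct

noncomputable section

variable (k : Type*) [Field k] (A : Type*) [Ring A] [HopfAlgebra k A]

/-- A normalized twist `J` for the Hopf algebra `A`: an invertible element of `A ⊗ A`
(with specified inverse) satisfying `(ε ⊗ id)(J) = (id ⊗ ε)(J) = 1` and the cocycle
condition `(Δ ⊗ id)(J)(J ⊗ 1) = (id ⊗ Δ)(J)(1 ⊗ J)`. -/
structure NormalizedTwist where
  J : A ⊗[k] A
  Jinv : A ⊗[k] A
  mul_inv : J * Jinv = 1
  inv_mul : Jinv * J = 1
  counit_id : (TensorProduct.lid k A) ((TensorProduct.map Coalgebra.counit LinearMap.id) J) = 1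
  id_counit : (TensorProduct.rid k A) ((TensorProduct.map LinearMap.id Coalgebra.counit) J) = 1
  cocycle : (Algebra.TensorProduct.assoc k k k A A A)
      ((TensorProduct.map Coalgebra.comul LinearMap.id) J * (J ⊗ₜ[k] (1 : A)))
    = (TensorProduct.map LinearMap.id Coalgebra.comul) J * ((1 : A) ⊗ₜ[k] J)

variable {k A} (t : NormalizedTwist k A)

/-- `Q_J = S(J⁽¹⁾) J⁽²⁾`. -/
def NormalizedTwist.QJ : A :=
  LinearMap.mul' k A ((TensorProduct.map (HopfAlgebra.antipode (R := k)) LinearMap.id) t.J)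

/-- `Q_J⁻¹ = J⁻⁽¹⁾ S(J⁻⁽²⁾)`. -/
def NormalizedTwist.QJinv : A :=
  LinearMap.mul' k A ((TensorProduct.map LinearMap.id (HopfAlgebra.antipode (R := k))) t.Jinv)

/-- The twisted comultiplication `Δᴶ(a) = J⁻¹ Δ(a) J`. -/
def NormalizedTwist.comulJ : A →ₗ[k] A ⊗[k] A :=
  LinearMap.mulLeft k t.Jinv ∘ₗ LinearMap.mulRight k t.J ∘ₗ Coalgebra.comul

/-- The twisted antipode `Sᴶ(a) = Q_J⁻¹ S(a) Q_J`. -/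
def NormalizedTwist.SJ : A →ₗ[k] A :=
  LinearMap.mulLeft k t.QJinv ∘ₗ LinearMap.mulRight k t.QJ ∘ₗ HopfAlgebra.antipode (R := k)

/-- The `n`-th Sweedler power map of the twisted Hopf algebra `A^J`. -/
def NormalizedTwist.PJ (n : ℤ) : A →ₗ[k] A := PGen k A t.comulJ t.SJ n

/-- `T = J⁻⁽¹⁾ α(J⁻⁽²⁾)`. -/
def NormalizedTwist.Telt (α : A →ₗ[k] k) : A :=
  (TensorProduct.rid k A) ((TensorProduct.map LinearMap.id α) t.Jinv)

/-- `R = α(J⁻⁽¹⁾) J⁻⁽²⁾`. -/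
def NormalizedTwist.Relt (α : A →ₗ[k] k) : A :=
  (TensorProduct.lid k A) ((TensorProduct.map α LinearMap.id) t.Jinv)

/-- `R⁻¹ = α(J⁽¹⁾) J⁽²⁾`. -/
def NormalizedTwist.Rinv (α : A →ₗ[k] k) : A :=
  (TensorProduct.lid k A) ((TensorProduct.map α LinearMap.id) t.J)

end

noncomputable section

variable (k : Type*) [Field k] (A : Type*) [Ring A] [HopfAlgebra k A]

/-- `lam ∈ A*` is a right integral with respect to the comultiplication-like map `D`:
`λ(a₍₁₎) a₍₂₎ = λ(a) 1` for all `a`. -/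
def IsRightIntegralOn (D : A →ₗ[k] A ⊗[k] A) (lam : A →ₗ[k] k) : Prop :=
  ∀ a : A, TensorProduct.lid k A (TensorProduct.map lam LinearMap.id (D a)) = lam a • (1 : A)

/-- The `n`-th indicator `ν_n(A) = tr(S ∘ P_{n-1})` of the Hopf algebra `A`. -/
def indicator (n : ℤ) : k :=
  LinearMap.trace k A (HopfAlgebra.antipode (R := k) ∘ₗ SweedlerP k A (n - 1))

end

/-! In the convolution algebra of `A →ₗ[k] A` the identity has inverse `S`, and since `S` is an
anti-homomorphism the Sweedler powers are its integer powers, `P_n = id^{*n}`; so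
`P_{n-1} * id = P_n`. The right integral property applied to `x Λ₁` gives the dual-basis identity
`x = λ(x Λ₁) S(Λ₂)`. Hence `(x, y) ↦ λ(x y)` is nondegenerate, which yields the mirrored identity
`x = λ(S(Λ₂) x) Λ₁` and with it Radford's trace formula `tr f = λ(S(Λ₂) f(Λ₁))`. For
`f = S ∘ P_{n-1}` this reads `λ(S(P_{n-1}(Λ₁) Λ₂)) = λ(S(P_n(Λ)))`. -/

open Coalgebra HopfAlgebra WithConv

section Convolution
variable {R A : Type*} [CommSemiring R]

lemma convMul_counit_smulRight {C : Type*} [AddCommMonoid C] [Module R C] [Coalgebra R C]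
    [Semiring A] [Algebra R A] (f : C →ₗ[R] A) (y : A) :
    toConv f * toConv (counit.smulRight y) = toConv (LinearMap.mulRight R y ∘ₗ f) := by
  ext c
  have h := congrArg (TensorProduct.rid R A)
    (sum_map_tmul_counit_eq (LinearMap.mulRight R y ∘ₗ f) c (repr := ℛ R c))
  rw [(ℛ R c).convMul_apply]
  simpa using h

variable [Semiring A] [HopfAlgebra R A]

variable (R A) in
def idConvUnit : (WithConv (A →ₗ[R] A))ˣ :=
  ⟨toConv .id, toConv (antipode R), LinearMap.id_mul_antipode, LinearMap.antipode_mul_id⟩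

lemma antipode_comp_algebraMap_counit :
    antipode R ∘ₗ Algebra.linearMap R A ∘ₗ counit = Algebra.linearMap R A ∘ₗ counit (A := A) := by
  ext a
  simp [Algebra.algebraMap_eq_smul_one, antipode_one]

lemma mulLeft_convMul_antipode (y : A) :
    toConv (LinearMap.mulLeft R y) * toConv (antipode R) = toConv (counit.smulRight y) := by
  ext c
  rw [(ℛ R c).convMul_apply]
  simp [mul_assoc, ← Finset.mul_sum, sum_mul_antipode_eq_smul]

end Convolution

section SweedlerPowers
variable {k A : Type*} [Field k] [Ring A] [HopfAlgebra k A]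

lemma toConv_PposGen_comul (n : ℕ) :
    toConv (PposGen k A comul n) = toConv (LinearMap.id : A →ₗ[k] A) ^ n := by
  induction n with
  | zero => rfl
  | succ n ih => rw [pow_succ', ← ih]; rfl

lemma toConv_antipode_comp_QposGen_comul (n : ℕ) :
    toConv (antipode k ∘ₗ QposGen k A comul n) = toConv (antipode k : A →ₗ[k] A) ^ n := by
  induction n with
  | zero => exact congrArg toConv antipode_comp_algebraMap_counit
  | succ n ih =>
    rw [pow_succ', ← ih, LinearMap.convMul_def]
    congr 1
    calc _ = (LinearMap.mul' k A ∘ₗ TensorProduct.map (antipode k) (antipode k)) ∘ₗ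
          TensorProduct.map LinearMap.id (QposGen k A comul n) ∘ₗ comul :=
        congrArg (· ∘ₗ _) antipode_comp_mul_comp_comm
      _ = _ := by
        rw [LinearMap.comp_assoc, ← LinearMap.comp_assoc _ _ (TensorProduct.map _ _),
          ← TensorProduct.map_comp, LinearMap.comp_id]

lemma toConv_SweedlerP (n : ℤ) : toConv (SweedlerP k A n) = ↑(idConvUnit k A ^ n) := by
  rcases n with m | m
  · simp [SweedlerP, PGen, toConv_PposGen_comul, idConvUnit]
  · rw [SweedlerP, PGen, if_neg (Int.negSucc_lt_zero m).not_ge, zpow_negSucc,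
      show (-Int.negSucc m).toNat = m + 1 by omega, toConv_antipode_comp_QposGen_comul]
    simp [idConvUnit]

lemma SweedlerP_sub_one_convMul_id (n : ℤ) :
    toConv (SweedlerP k A (n - 1)) * toConv LinearMap.id = toConv (SweedlerP k A n) := by
  rw [toConv_SweedlerP, toConv_SweedlerP, zpow_sub_one]
  exact congrArg Units.val (inv_mul_cancel_right _ (idConvUnit k A))

end SweedlerPowers

section Integrals
variable {k A : Type*} [Field k] [Ring A] [HopfAlgebra k A] {lam : A →ₗ[k] k} {Λ : A}

lemma IsRightIntegralOn.toConv_mulLeft (hri : IsRightIntegralOn k A comul lam) (x : A) :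
    toConv (Algebra.linearMap k A ∘ₗ lam ∘ₗ LinearMap.mulLeft k x) =
      ∑ i ∈ (ℛ k x).index,
        toConv (Algebra.linearMap k A ∘ₗ lam ∘ₗ LinearMap.mulLeft k ((ℛ k x).left i)) *
          toConv (LinearMap.mulLeft k ((ℛ k x).right i)) := by
  ext c
  have h := hri (x * c)
  rw [← ((ℛ k x).mul (ℛ k c)).eq] at h
  simp only [Repr.mul_index, Repr.mul_left, Repr.mul_right, Finset.sum_product, map_sum,
    TensorProduct.map_tmul, TensorProduct.lid_tmul] at h
  simpa [(ℛ k c).convMul_apply, Algebra.algebraMap_eq_smul_one] using h.symm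

lemma IsRightIntegralOn.sum_mul_smul_antipode (hri : IsRightIntegralOn k A comul lam)
    (hint : IsLeftIntegral k A Λ) (hnorm : lam Λ = 1) {ι : Type*} (r : Repr k Λ ι) (x : A) :
    ∑ i ∈ r.index, lam (x * r.left i) • antipode k (r.right i) = x := by
  set g : A → WithConv (A →ₗ[k] A) := fun y ↦
    toConv (Algebra.linearMap k A ∘ₗ lam ∘ₗ LinearMap.mulLeft k y)
  calc ∑ i ∈ r.index, lam (x * r.left i) • antipode k (r.right i)
      = (g x * toConv (antipode k) : WithConv (A →ₗ[k] A)) Λ := by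
        simp [g, r.convMul_apply, Algebra.smul_def]
    _ = ∑ i ∈ (ℛ k x).index, (g ((ℛ k x).left i) *
          toConv (counit.smulRight ((ℛ k x).right i)) : WithConv (A →ₗ[k] A)) Λ := by
        simp only [g]
        rw [hri.toConv_mulLeft, Finset.sum_mul]
        simp [mul_assoc, mulLeft_convMul_antipode]
    _ = ∑ i ∈ (ℛ k x).index, lam ((ℛ k x).left i * Λ) • (ℛ k x).right i := by
        simp [g, convMul_counit_smulRight, Algebra.smul_def]
    _ = x := by
        simp [hint _, hnorm, sum_counit_smul]

variable [FiniteDimensional k A]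

lemma IsRightIntegralOn.eq_zero_of_forall_mul_eq_zero (hri : IsRightIntegralOn k A comul lam)
    (hint : IsLeftIntegral k A Λ) (hnorm : lam Λ = 1) {y : A} (hy : ∀ z, lam (z * y) = 0) :
    y = 0 := by
  set Φ : A →ₗ[k] Module.Dual k A := (LinearMap.mul k A).compr₂ lam
  have hinj : Function.Injective Φ := by
    rw [← LinearMap.ker_eq_bot, LinearMap.ker_eq_bot']
    intro z hz
    have hz' : ∀ b, lam (z * b) = 0 := fun b ↦ LinearMap.congr_fun hz b
    rw [← hri.sum_mul_smul_antipode hint hnorm (ℛ k Λ) z]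
    simp [hz']
  have hsurj := (LinearMap.injective_iff_surjective_of_finrank_eq_finrank
    Subspace.dual_finrank_eq.symm).mp hinj
  refine (Module.forall_dual_apply_eq_zero_iff k y).mp fun φ ↦ ?_
  obtain ⟨z, rfl⟩ := hsurj φ
  exact hy z

lemma IsRightIntegralOn.sum_antipode_mul_smul (hri : IsRightIntegralOn k A comul lam)
    (hint : IsLeftIntegral k A Λ) (hnorm : lam Λ = 1) {ι : Type*} (r : Repr k Λ ι) (x : A) :
    ∑ i ∈ r.index, lam (antipode k (r.right i) * x) • r.left i = x := by
  rw [← sub_eq_zero]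
  refine hri.eq_zero_of_forall_mul_eq_zero hint hnorm fun z ↦ ?_
  calc lam (z * (∑ i ∈ r.index, lam (antipode k (r.right i) * x) • r.left i - x))
      = lam ((∑ i ∈ r.index, lam (z * r.left i) • antipode k (r.right i)) * x) - lam (z * x) := by
        simp [mul_sub, Finset.mul_sum, Finset.sum_mul, mul_comm]
    _ = 0 := by rw [hri.sum_mul_smul_antipode hint hnorm, sub_self]

lemma IsRightIntegralOn.trace_eq_sum (hri : IsRightIntegralOn k A comul lam)
    (hint : IsLeftIntegral k A Λ) (hnorm : lam Λ = 1) {ι : Type*} (r : Repr k Λ ι)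
    (f : A →ₗ[k] A) :
    LinearMap.trace k A f = ∑ i ∈ r.index, lam (antipode k (r.right i) * f (r.left i)) := by
  have hf : f = ∑ i ∈ r.index,
      (lam ∘ₗ LinearMap.mulLeft k (antipode k (r.right i))).smulRight (f (r.left i)) := by
    ext x
    conv_lhs => rw [← hri.sum_antipode_mul_smul hint hnorm r x]
    simp
  conv_lhs => rw [hf]
  simp

end Integrals

/-- Let `A` be a finite-dimensional Hopf algebra with a right integral
`λ ∈ A*` and a left integral `Λ ∈ A` with `λ(Λ) = 1`. Then for every `n ∈ ℤ`,
`ν_n(A) = λ(S(Pₙ(Λ)))`. -/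
theorem indicator_eq_integral_formula
    (k : Type*) [Field k] (A : Type*) [Ring A] [HopfAlgebra k A] [FiniteDimensional k A]
    (lam : A →ₗ[k] k) (hri : IsRightIntegralOn k A (Coalgebra.comul (R := k)) lam)
    (Λ : A) (hint : IsLeftIntegral k A Λ) (hnorm : lam Λ = 1) (n : ℤ) :
    indicator k A n = lam (HopfAlgebra.antipode (R := k) (SweedlerP k A n Λ)) := by
  set r := ℛ k Λ
  calc indicator k A n
      = ∑ i ∈ r.index,
          lam (antipode k (r.right i) * antipode k (SweedlerP k A (n - 1) (r.left i))) :=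
        hri.trace_eq_sum hint hnorm r _
    _ = lam (antipode k (∑ i ∈ r.index, SweedlerP k A (n - 1) (r.left i) * r.right i)) := by
        simp [antipode_mul_antidistrib, map_sum]
    _ = lam (antipode k
          ((toConv (SweedlerP k A (n - 1)) * toConv LinearMap.id : WithConv (A →ₗ[k] A)) Λ)) := by
        rw [r.convMul_apply]
        rfl
    _ = lam (antipode k (SweedlerP k A n Λ)) := by
        rw [SweedlerP_sub_one_convMul_id]
end
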